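/- Let $M$ be a $\mathbb{C}$-module with a symmetric $2n$-multilinear form $\mu : M^{2n} \to \mathbb{C}$ (intersection form), writing $D^{2n} := \mu(D, \dots, D)$. Let $q : M \to \mathbb{C}$ be a quadratic form with polar bilinear form $B$, and $a_0 \in \mathbb{C}$, $a_0 \neq 0$, such that $D^{2n} = a_0 \, q(D)^n$ for all $D \in M$. If $w, A, H \in M$ satisfy $B(w,A) = B(w,H) = 0$ and $q(H) = 0$, then the mixed intersection number $\mu(w, w, A, \dots, A, H, \dots, H)$ with $w$ twice, $A$ exactly $n-2$ times, and $H$ exactly $n$ times, equals zero. -/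

import Mathlib

/-!
Substitute `D = x₀ • w + x₁ • A + x₂ • H` into the Fujiki relation. By multilinearity,
`x ↦ μ (D, …, D)` is a polynomial in `x₀, x₁, x₂`, and by symmetry of `μ` its coefficient at
`x₀² x₁ⁿ⁻² x₂ⁿ` is a positive multiple of the mixed intersection number. On the other side,
`B(w, A) = B(w, H) = 0` and `q(H) = 0` give `q(D) = x₀² q(w) + x₁² q(A) + 2 x₁ x₂ B(A, H)`, and no
monomial of a power of this has larger `x₂`-degree than `x₁`-degree, while `n > n - 2`.
-/

open MvPolynomial Finset

noncomputable def fiberCard {α ι : Type*} [Fintype α] (r : α → ι) : ι →₀ ℕ :=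
  ∑ a, Finsupp.single (r a) 1

theorem fiberCard_apply {α ι : Type*} [Fintype α] [DecidableEq ι] (r : α → ι) (j : ι) :
    fiberCard r j = #{a | r a = j} := by
  simp only [fiberCard, Finsupp.finsetSum_apply, Finsupp.single_apply, Finset.sum_boole,
    Nat.cast_id, eq_comm]

theorem exists_perm_comp_eq_of_fiberCard_eq {α ι : Type*} [Fintype α] [DecidableEq ι]
    {f g : α → ι} (h : fiberCard f = fiberCard g) : ∃ σ : Equiv.Perm α, g ∘ σ = f := by
  have hcard (j : ι) : Fintype.card {a // f a = j} = Fintype.card {a // g a = j} := by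
    rw [Fintype.card_subtype, Fintype.card_subtype, ← fiberCard_apply, ← fiberCard_apply, h]
  exact ⟨Equiv.ofFiberEquiv fun j => Fintype.equivOfCardEq (hcard j),
    funext (Equiv.ofFiberEquiv_map _)⟩

theorem fiberCard_comp_val {ι : Type*} [DecidableEq ι] {m : ℕ} (g : ℕ → ι) (j : ι) :
    fiberCard (g ∘ Fin.val : Fin m → ι) j = #{k ∈ range m | g k = j} := by
  rw [fiberCard_apply, card_filter, card_filter]
  exact Fin.sum_univ_eq_sum_range (fun k => if g k = j then 1 else 0) m

def blockIndex (a b k : ℕ) : Fin 3 :=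
  if k < a then 0 else if k < b then 1 else 2

theorem fiberCard_blockIndex_one {a b m : ℕ} (hbm : b ≤ m) :
    fiberCard (blockIndex a b ∘ Fin.val : Fin m → Fin 3) 1 = b - a := by
  have hblock : {k ∈ range m | blockIndex a b k = 1} = Ico a b := by
    ext k
    grind [blockIndex]
  rw [fiberCard_comp_val, hblock, Nat.card_Ico]

theorem fiberCard_blockIndex_two {a b m : ℕ} (hab : a ≤ b) :
    fiberCard (blockIndex a b ∘ Fin.val : Fin m → Fin 3) 2 = m - b := by
  have hblock : {k ∈ range m | blockIndex a b k = 2} = Ico b m := by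
    ext k
    grind [blockIndex]
  rw [fiberCard_comp_val, hblock, Nat.card_Ico]

namespace MvPolynomial

theorem prod_X_eq_monomial_fiberCard {α ι R : Type*} [Fintype α] [CommSemiring R]
    (r : α → ι) : ∏ a, (X (r a) : MvPolynomial ι R) = monomial (fiberCard r) 1 := by
  rw [fiberCard, monomial_sum_one]
  rfl

variable {σ R : Type*} [CommSemiring R]

theorem coeff_pow_eq_zero_of_notMem {p : MvPolynomial σ R} (S : AddSubmonoid (σ →₀ ℕ))
    (hp : ∀ d ∈ p.support, d ∈ S) (n : ℕ) {d : σ →₀ ℕ} (hd : d ∉ S) : (p ^ n).coeff d = 0 := by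
  classical
  suffices ∀ d ∈ (p ^ n).support, d ∈ S from notMem_support_iff.mp (mt (this d) hd)
  induction n with
  | zero =>
    intro d hd
    rw [pow_zero, one_def] at hd
    rw [Finset.mem_singleton.mp (support_monomial_subset hd)]
    exact S.zero_mem
  | succ n ih =>
    intro d hd
    obtain ⟨a, ha, b, hb, rfl⟩ := Finset.mem_add.mp (support_mul _ _ (pow_succ p n ▸ hd))
    exact S.add_mem (ih a ha) (hp b hb)

/-- Every monomial of the trinomial, hence of its powers, has `k`-degree at most its `j`-degree. -/
theorem coeff_trinomial_pow_eq_zero {i j k : σ} (hki : k ≠ i) (a b c : R) (n : ℕ)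
    {d : σ →₀ ℕ} (hd : d j < d k) :
    ((C a * X i ^ 2 + C b * X j ^ 2 + C c * (X j * X k)) ^ n).coeff d = 0 := by
  classical
  let S : AddSubmonoid (σ →₀ ℕ) :=
    { carrier := {d | d k ≤ d j}
      add_mem' := fun {x y} (hx : x k ≤ x j) (hy : y k ≤ y j) =>
        show x k + y k ≤ x j + y j by omega
      zero_mem' := show (0 : σ →₀ ℕ) k ≤ (0 : σ →₀ ℕ) j from le_rfl }
  refine coeff_pow_eq_zero_of_notMem S (fun e he => show e k ≤ e j from ?_) n (not_le.mpr hd)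
  by_contra! hlt
  refine mem_support_iff.mp he ?_
  simp only [X_pow_eq_monomial, C_mul_monomial, coeff_add, coeff_monomial]
  simp only [X, monomial_mul, C_mul_monomial, coeff_monomial]
  rw [if_neg, if_neg, if_neg, add_zero, add_zero] <;> rintro rfl <;>
    grind [Finsupp.add_apply]

end MvPolynomial

theorem QuadraticMap.apply_smul_add_smul_add_smul {R M : Type*} [CommRing R] [AddCommGroup M]
    [Module R M] (q : QuadraticForm R M) (B : M →ₗ[R] M →ₗ[R] R)
    (hB : ∀ x y, q (x + y) = q x + q y + 2 * B x y) {u v w : M} (huv : B u v = 0)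
    (huw : B u w = 0) (hw : q w = 0) (a b c : R) :
    q (a • u + b • v + c • w) = a ^ 2 * q u + b ^ 2 * q v + 2 * (b * c) * B v w := by
  rw [add_assoc, hB, hB, q.map_smul, q.map_smul, q.map_smul]
  simp only [map_add, map_smul, LinearMap.smul_apply, smul_eq_mul, huv, huw, hw]
  ring

namespace MultilinearMap

variable {R M ι : Type*} [CommRing R] [AddCommMonoid M] [Module R M] {m : ℕ}
  (μ : MultilinearMap R (fun _ : Fin m => M) R) (v : ι → M)

def IsSymmetric : Prop := ∀ (u : Fin m → M) (σ : Equiv.Perm (Fin m)), μ (u ∘ σ) = μ u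

variable {μ} in
theorem IsSymmetric.apply_comp_eq_of_fiberCard_eq [DecidableEq ι] (hμ : μ.IsSymmetric)
    {r r' : Fin m → ι} (h : fiberCard r = fiberCard r') : μ (v ∘ r) = μ (v ∘ r') := by
  obtain ⟨σ, rfl⟩ := exists_perm_comp_eq_of_fiberCard_eq h
  exact hμ (v ∘ r') σ

variable [Fintype ι]

noncomputable def diagPolynomial : MvPolynomial ι R :=
  ∑ r : Fin m → ι, C (μ (v ∘ r)) * ∏ i, X (r i)

theorem eval_diagPolynomial (x : ι → R) :
    eval x (μ.diagPolynomial v) = μ (fun _ => ∑ j, x j • v j) := by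
  simp only [diagPolynomial, _root_.map_sum, _root_.map_mul, eval_C, _root_.map_prod, eval_X,
    μ.map_sum, μ.map_smul_univ, smul_eq_mul]
  exact sum_congr rfl fun r _ => mul_comm _ _

variable {μ} in
theorem IsSymmetric.coeff_fiberCard_diagPolynomial [DecidableEq ι] (hμ : μ.IsSymmetric)
    (r₀ : Fin m → ι) :
    (μ.diagPolynomial v).coeff (fiberCard r₀) =
      #{r : Fin m → ι | fiberCard r = fiberCard r₀} • μ (v ∘ r₀) := by
  simp only [diagPolynomial, coeff_sum, prod_X_eq_monomial_fiberCard, coeff_C_mul,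
    coeff_monomial, mul_ite, mul_one, mul_zero]
  rw [← Finset.sum_filter, ← Finset.sum_const]
  exact sum_congr rfl fun r hr => hμ.apply_comp_eq_of_fiberCard_eq v (mem_filter.mp hr).2

variable {μ} in
theorem IsSymmetric.apply_comp_eq_zero_of_coeff_eq_zero [DecidableEq ι] [NoZeroSMulDivisors ℕ R]
    (hμ : μ.IsSymmetric) (r₀ : Fin m → ι) (h : (μ.diagPolynomial v).coeff (fiberCard r₀) = 0) :
    μ (v ∘ r₀) = 0 := by
  rw [hμ.coeff_fiberCard_diagPolynomial, smul_eq_zero] at h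
  exact h.resolve_left (card_ne_zero.mpr ⟨r₀, mem_filter.mpr ⟨mem_univ _, rfl⟩⟩)

end MultilinearMap

theorem mixed_intersection_vanishes_general {M : Type*} [AddCommGroup M] [Module ℂ M]
    (n : ℕ) (hn : 2 ≤ n)
    (μ : MultilinearMap ℂ (fun _ : Fin (2 * n) => M) ℂ)
    (hsymm : ∀ (v : Fin (2 * n) → M) (σ : Equiv.Perm (Fin (2 * n))),
      μ (v ∘ σ) = μ v)
    (q : QuadraticForm ℂ M) (B : M →ₗ[ℂ] M →ₗ[ℂ] ℂ)
    (hB : ∀ x y, q (x + y) = q x + q y + 2 * B x y)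
    (a0 : ℂ)
    (hFujiki : ∀ D : M, μ (fun _ => D) = a0 * q D ^ n)
    (w A H : M) (hwA : B w A = 0) (hwH : B w H = 0) (hH : q H = 0) :
    μ (fun p : Fin (2 * n) =>
        if (p : ℕ) < 2 then w
        else if (p : ℕ) < 2 + (n - 2) then A
        else H) = 0 := by
  have hlayout : (fun p : Fin (2 * n) => if (p : ℕ) < 2 then w
      else if (p : ℕ) < 2 + (n - 2) then A else H) =
      ![w, A, H] ∘ (blockIndex 2 (2 + (n - 2)) ∘ Fin.val) := by
    funext p
    simp only [blockIndex, Function.comp_apply]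
    split_ifs <;> rfl
  have hpoly : μ.diagPolynomial ![w, A, H] =
      C a0 * (C (q w) * X 0 ^ 2 + C (q A) * X 1 ^ 2 + C (2 * B A H) * (X 1 * X 2)) ^ n := by
    refine MvPolynomial.funext fun x => ?_
    rw [μ.eval_diagPolynomial, Fin.sum_univ_three]
    simp only [Matrix.cons_val_zero, Matrix.cons_val_one, Matrix.cons_val_two, Matrix.tail_cons,
      Matrix.head_cons]
    rw [hFujiki, q.apply_smul_add_smul_add_smul B hB hwA hwH hH]
    simp only [map_mul, map_add, map_pow, eval_C, eval_X]
    ring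
  have hdeg : fiberCard (blockIndex 2 (2 + (n - 2)) ∘ Fin.val : Fin (2 * n) → Fin 3) 1 <
      fiberCard (blockIndex 2 (2 + (n - 2)) ∘ Fin.val : Fin (2 * n) → Fin 3) 2 := by
    rw [fiberCard_blockIndex_one (by omega), fiberCard_blockIndex_two (by omega)]
    omega
  rw [hlayout]
  refine MultilinearMap.IsSymmetric.apply_comp_eq_zero_of_coeff_eq_zero _ hsymm _ ?_
  rw [hpoly, coeff_C_mul, coeff_trinomial_pow_eq_zero (by decide) _ _ _ n hdeg, mul_zero]

/-- Abstract Fujiki-relation argument: the mixed intersection number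
`μ(w, w, A^(n-2), H^n)` vanishes. -/
theorem mixed_intersection_vanishes {M : Type*} [AddCommGroup M] [Module ℂ M]
    (n : ℕ) (hn : 2 ≤ n)
    (μ : MultilinearMap ℂ (fun _ : Fin (2 * n) => M) ℂ)
    (hsymm : ∀ (v : Fin (2 * n) → M) (σ : Equiv.Perm (Fin (2 * n))),
      μ (v ∘ σ) = μ v)
    (q : QuadraticForm ℂ M) (B : M →ₗ[ℂ] M →ₗ[ℂ] ℂ)
    (hBsymm : ∀ x y, B x y = B y x)
    (hB : ∀ x y, q (x + y) = q x + q y + 2 * B x y)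
    (a0 : ℂ) (ha0 : a0 ≠ 0)
    (hFujiki : ∀ D : M, μ (fun _ => D) = a0 * q D ^ n)
    (w A H : M) (hwA : B w A = 0) (hwH : B w H = 0) (hH : q H = 0) :
    μ (fun p : Fin (2 * n) =>
        if (p : ℕ) < 2 then w
        else if (p : ℕ) < 2 + (n - 2) then A
        else H) = 0 :=
  mixed_intersection_vanishes_general n hn μ hsymm q B hB a0 hFujiki w A H hwA hwH hH
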